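/- arXiv:1504.04316 — 3 statements merged into one kernel-verified Lean document; each statement's English description precedes it below -/
import Mathlib

section
/- There exists η₀ ∈ (2/3, 1) (namely η₀ = (√7 − 1)/2) such that for all r₁, r₂ ≥ 0 and all real θ₁, θ₂ with cos(θ₁ − θ₂) ≤ 1/2, one has |r₁·e^{iθ₁} + r₂·e^{iθ₂}| ≤ max{η₀·r₁ + r₂, r₁ + η₀·r₂}. -/
/-!
By the law of cosines, `cos (θ₁ - θ₂) ≤ 1/2` gives `|r₁ e^{iθ₁} + r₂ e^{iθ₂}|² ≤ r₁² + r₁ r₂ + r₂²`.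
If `r₁ ≤ r₂`, this is at most `(η r₁ + r₂)²` as soon as `1 - η² ≤ 2η - 1`, i.e. `η² + 2η ≥ 2`,
which `η₀ = (√7 - 1)/2` satisfies; the case `r₂ ≤ r₁` is symmetric.
-/

open Complex

lemma norm_ofReal_mul_exp_add_sq (r₁ r₂ θ₁ θ₂ : ℝ) :
    ‖(r₁ : ℂ) * exp (θ₁ * I) + (r₂ : ℂ) * exp (θ₂ * I)‖ ^ 2
      = r₁ ^ 2 + r₂ ^ 2 + 2 * r₁ * r₂ * Real.cos (θ₁ - θ₂) := by
  rw [Complex.sq_norm]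
  simp only [normSq_apply, add_re, add_im, re_ofReal_mul, im_ofReal_mul, exp_ofReal_mul_I_re,
    exp_ofReal_mul_I_im, Real.cos_sub]
  linear_combination r₁ ^ 2 * Real.sin_sq_add_cos_sq θ₁ + r₂ ^ 2 * Real.sin_sq_add_cos_sq θ₂

lemma sq_add_sq_add_mul_le_sq {η r₁ r₂ c : ℝ} (hη₀ : 0 ≤ η) (hη : 2 ≤ η ^ 2 + 2 * η)
    (hr₁ : 0 ≤ r₁) (hr₁₂ : r₁ ≤ r₂) (hc : c ≤ 1 / 2) :
    r₁ ^ 2 + r₂ ^ 2 + 2 * r₁ * r₂ * c ≤ (η * r₁ + r₂) ^ 2 := by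
  have hcross : 2 * r₁ * r₂ * c ≤ r₁ * r₂ := by
    nlinarith [mul_nonneg hr₁ (hr₁.trans hr₁₂)]
  have hη_half : 0 ≤ 2 * η - 1 := by nlinarith
  nlinarith [mul_nonneg hη_half (mul_nonneg hr₁ (sub_nonneg.mpr hr₁₂)),
    mul_nonneg (sub_nonneg.mpr hη) (sq_nonneg r₁)]

lemma norm_ofReal_mul_exp_add_le {η r₁ r₂ θ₁ θ₂ : ℝ} (hη₀ : 0 ≤ η) (hη : 2 ≤ η ^ 2 + 2 * η)
    (hr₁ : 0 ≤ r₁) (hr₁₂ : r₁ ≤ r₂) (hθ : Real.cos (θ₁ - θ₂) ≤ 1 / 2) :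
    ‖(r₁ : ℂ) * exp (θ₁ * I) + (r₂ : ℂ) * exp (θ₂ * I)‖ ≤ η * r₁ + r₂ := by
  refine le_of_pow_le_pow_left₀ two_ne_zero
    (add_nonneg (mul_nonneg hη₀ hr₁) (hr₁.trans hr₁₂)) ?_
  rw [norm_ofReal_mul_exp_add_sq]
  exact sq_add_sq_add_mul_le_sq hη₀ hη hr₁ hr₁₂ hθ

lemma norm_ofReal_mul_exp_add_le_max {η r₁ r₂ θ₁ θ₂ : ℝ} (hη₀ : 0 ≤ η)
    (hη : 2 ≤ η ^ 2 + 2 * η) (hr₁ : 0 ≤ r₁) (hr₂ : 0 ≤ r₂) (hθ : Real.cos (θ₁ - θ₂) ≤ 1 / 2) :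
    ‖(r₁ : ℂ) * exp (θ₁ * I) + (r₂ : ℂ) * exp (θ₂ * I)‖ ≤ max (η * r₁ + r₂) (r₁ + η * r₂) := by
  rcases le_total r₁ r₂ with h | h
  · exact le_max_of_le_left (norm_ofReal_mul_exp_add_le hη₀ hη hr₁ h hθ)
  · rw [← Real.cos_neg, neg_sub] at hθ
    rw [add_comm, add_comm r₁]
    exact le_max_of_le_right (norm_ofReal_mul_exp_add_le hη₀ hη hr₂ h hθ)

lemma two_thirds_lt_sqrt_seven_sub_one_div_two : 2 / 3 < (√7 - 1) / 2 := by
  have : 7 / 3 < √7 := by rw [Real.lt_sqrt (by norm_num)]; norm_num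
  linarith

lemma sqrt_seven_sub_one_div_two_lt_one : (√7 - 1) / 2 < 1 := by
  have : √7 < 3 := by rw [Real.sqrt_lt' (by norm_num)]; norm_num
  linarith

lemma two_le_sq_add_two_mul_sqrt_seven_sub_one_div_two :
    2 ≤ ((√7 - 1) / 2) ^ 2 + 2 * ((√7 - 1) / 2) := by
  have hsq : √7 ^ 2 = 7 := Real.sq_sqrt (by norm_num)
  have : 2 ≤ √7 := by rw [Real.le_sqrt (by norm_num) (by norm_num)]; norm_num
  nlinarith

theorem stmt_6 :
    ∃ η₀ : ℝ, 2/3 < η₀ ∧ η₀ < 1 ∧ η₀ = (Real.sqrt 7 - 1) / 2 ∧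
      ∀ r₁ r₂ θ₁ θ₂ : ℝ, 0 ≤ r₁ → 0 ≤ r₂ → Real.cos (θ₁ - θ₂) ≤ 1/2 →
        ‖(r₁ : ℂ) * Complex.exp (θ₁ * Complex.I)
            + (r₂ : ℂ) * Complex.exp (θ₂ * Complex.I)‖
          ≤ max (η₀ * r₁ + r₂) (r₁ + η₀ * r₂) := by
  refine ⟨(√7 - 1) / 2, two_thirds_lt_sqrt_seven_sub_one_div_two,
    sqrt_seven_sub_one_div_two_lt_one, rfl, fun r₁ r₂ θ₁ θ₂ hr₁ hr₂ hθ => ?_⟩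
  exact norm_ofReal_mul_exp_add_le_max (by linarith [two_thirds_lt_sqrt_seven_sub_one_div_two])
    two_le_sq_add_two_mul_sqrt_seven_sub_one_div_two hr₁ hr₂ hθ
end

section
/- Let (Y, μ) be a probability space, F : Y → Y measure preserving, R : Y → (0,∞) measurable with R̄ = ∫ R dμ < ∞, and let μ^R = (μ × Leb)/R̄ be the normalized measure on the suspension Y^R = {(y,u) : 0 ≤ u < R(y)}. For v, w ∈ L^∞(Y^R), n ≥ 1, s ∈ ℂ, define v_s(y) = ∫₀^{R(y)} e^{su} v(y,u) du, w_s(y) = ∫₀^{R(y)} e^{−su} w(y,u) du, R_n = Σ_{j=0}^{n−1} R∘F^j, and J_n(t) = ∫_{Y^R} 1_{{R_n(y) < t+u < R_{n+1}(y)}} v(y,u) w(F^n y, t+u−R_n(y)) dμ^R. Then the Laplace transform Ĵ_n(s) = ∫₀^∞ e^{−st} J_n(t) dt satisfies Ĵ_n(s) = (1/R̄)·∫_Y e^{−s R_n} v_s · (w_s ∘ F^n) dμ, for all s with Re s > 0. -/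
/-!
Swap the Laplace transform with the `y`-integral and, for fixed `y`, with the `u`-integral
(Fubini, dominated by `e^{-(Re s) t}` times `|v| |w| R`). For fixed `y` and `u` the remaining
`t`-integral is the Laplace transform of `w (F^n y)` on `(0, R (F^n y))` after the substitution
`t' = t + u - R_n y`; this shift produces the factor `e^{-s R_n y} e^{s u}`. The substitution costs
nothing on `t ≤ 0`, since there `t + u ≤ R y ≤ R_n y` as `n ≥ 1`.
-/

open MeasureTheory Set Function

lemma norm_cexp_neg_mul_ofReal (s : ℂ) (t : ℝ) :
    ‖Complex.exp (-s * t)‖ = Real.exp (-s.re * t) := by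
  simp [Complex.norm_exp, Complex.mul_re]

lemma abs_ite_mul_le {P : Prop} [Decidable P] {x y Mx My : ℝ} (hx : |x| ≤ Mx)
    (hy : |y| ≤ My) :
    |if P then x * y else 0| ≤ Mx * My := by
  have hMx : 0 ≤ Mx := (abs_nonneg x).trans hx
  split_ifs
  · rw [abs_mul]
    exact mul_le_mul hx hy (abs_nonneg y) hMx
  · simpa using mul_nonneg hMx ((abs_nonneg y).trans hy)

lemma stronglyMeasurable_setIntegral_Ioc {X : Type*} [MeasurableSpace X] {f : X → ℝ → ℝ}
    (hf : Measurable (uncurry f)) {a : X → ℝ} (ha : Measurable a) :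
    StronglyMeasurable fun x => ∫ u in Ioc 0 (a x), f x u := by
  have hind : Measurable fun p : X × ℝ => (Ioc 0 (a p.1)).indicator (f p.1) p.2 := by
    refine Measurable.ite ?_ hf measurable_const
    exact (measurableSet_lt measurable_const measurable_snd).inter
      (measurableSet_le measurable_snd (ha.comp measurable_fst))
  simp_rw [← integral_indicator measurableSet_Ioc]
  exact hind.stronglyMeasurable.integral_prod_right'

lemma abs_setIntegral_Ioc_le {f : ℝ → ℝ} {a C : ℝ} (ha : 0 ≤ a)
    (hf : ∀ u, |f u| ≤ C) :
    |∫ u in Ioc 0 a, f u| ≤ C * a := by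
  simpa [Real.volume_real_Ioc_of_le ha] using
    norm_setIntegral_le_of_norm_le_const (f := f) (s := Ioc 0 a) (μ := volume)
      measure_Ioc_lt_top fun u _ => hf u

lemma laplace_integral_comm {X : Type*} [MeasurableSpace X] {ν : Measure X} [SFinite ν]
    {s : ℂ} (hs : 0 < s.re) {k : ℝ → X → ℝ} (hk : StronglyMeasurable (uncurry k))
    {B : X → ℝ} (hB : Integrable B ν) (hkB : ∀ t x, |k t x| ≤ B x) :
    ∫ t in Ioi (0 : ℝ), Complex.exp (-s * t) * ((∫ x, k t x ∂ν : ℝ) : ℂ)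
      = ∫ x, (∫ t in Ioi (0 : ℝ), Complex.exp (-s * t) * (k t x : ℂ)) ∂ν := by
  have hint : Integrable (uncurry fun (t : ℝ) (x : X) => Complex.exp (-s * t) * (k t x : ℂ))
      ((volume.restrict (Ioi 0)).prod ν) := by
    have hdom : Integrable (fun p : ℝ × X => Real.exp (-s.re * p.1) * B p.2)
        ((volume.restrict (Ioi 0)).prod ν) :=
      (exp_neg_integrableOn_Ioi 0 hs).mul_prod hB
    refine hdom.mono' ?_ (Filter.Eventually.of_forall fun p => ?_)
    · exact ((by fun_prop : Continuous fun t : ℝ => Complex.exp (-s * t)).measurable.comp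
        measurable_fst).aestronglyMeasurable.mul
        (Complex.continuous_ofReal.comp_stronglyMeasurable hk).aestronglyMeasurable
    · simp only [uncurry, norm_mul, norm_cexp_neg_mul_ofReal, Complex.norm_real, Real.norm_eq_abs]
      gcongr
      exact hkB _ _
  rw [← integral_integral_swap hint]
  refine setIntegral_congr_fun measurableSet_Ioi fun t _ => ?_
  rw [integral_const_mul]
  exact congrArg _ integral_ofReal.symm

lemma laplace_window_shift (s : ℂ) {c u : ℝ} (huc : u ≤ c) (b r : ℝ) (g : ℝ → ℝ) :
    ∫ t in Ioi (0 : ℝ), Complex.exp (-s * t) *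
        ((if c < t + u ∧ t + u < c + b then r * g (t + u - c) else 0 : ℝ) : ℂ)
      = Complex.exp (-s * c) * (Complex.exp (s * u) * r) *
          ∫ t in Ioc (0 : ℝ) b, Complex.exp (-s * t) * (g t : ℂ) := by
  set h : ℝ → ℂ := fun t => Complex.exp (-s * t) *
    ((if c < t + u ∧ t + u < c + b then r * g (t + u - c) else 0 : ℝ) : ℂ)
  have h_nonpos : ∀ t ∉ Ioi (0 : ℝ), h t = 0 := by
    intro t ht
    have : ¬ c < t + u := by simp only [mem_Ioi, not_lt] at ht; linarith
    simp [h, this]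
  have h_shift : ∀ t, h (t + (c - u)) = Complex.exp (-s * c) * (Complex.exp (s * u) * r) *
      (Ioo 0 b).indicator (fun t => Complex.exp (-s * t) * (g t : ℂ)) t := by
    intro t
    have hcond : (c < t + (c - u) + u ∧ t + (c - u) + u < c + b) ↔ t ∈ Ioo 0 b := by
      simp only [mem_Ioo]
      constructor <;> rintro ⟨h1, h2⟩ <;> constructor <;> linarith
    by_cases ht : t ∈ Ioo 0 b
    · simp only [h, if_pos (hcond.mpr ht), indicator_of_mem ht,
        show t + (c - u) + u - c = t by ring]
      rw [show -s * ((t + (c - u) : ℝ) : ℂ) = -s * c + s * u + -s * t by push_cast; ring,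
        Complex.exp_add, Complex.exp_add]
      push_cast
      ring
    · simp [h, if_neg (fun hc => ht (hcond.mp hc)), indicator_of_notMem ht]
  rw [setIntegral_eq_integral_of_forall_compl_eq_zero h_nonpos,
    ← integral_add_right_eq_self h (c - u)]
  simp_rw [h_shift]
  rw [integral_const_mul, integral_indicator measurableSet_Ioo, integral_Ioc_eq_integral_Ioo]

lemma laplace_window_integral {s : ℂ} (hs : 0 < s.re) {a b c : ℝ} (hac : a ≤ c)
    {f g : ℝ → ℝ} (hf : Measurable f) (hg : Measurable g) {Mf Mg : ℝ}
    (hfb : ∀ u, |f u| ≤ Mf) (hgb : ∀ u, |g u| ≤ Mg) :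
    ∫ t in Ioi (0 : ℝ), Complex.exp (-s * t) *
        ((∫ u in Ioc (0 : ℝ) a,
          if c < t + u ∧ t + u < c + b then f u * g (t + u - c) else 0 : ℝ) : ℂ)
      = Complex.exp (-s * c) * (∫ u in Ioc (0 : ℝ) a, Complex.exp (s * u) * (f u : ℂ)) *
          ∫ u in Ioc (0 : ℝ) b, Complex.exp (-s * u) * (g u : ℂ) := by
  have hk : Measurable (uncurry fun t u : ℝ =>
      if c < t + u ∧ t + u < c + b then f u * g (t + u - c) else 0) := by
    have hsum : Measurable fun p : ℝ × ℝ => p.1 + p.2 := measurable_fst.add measurable_snd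
    refine Measurable.ite ?_ ((hf.comp measurable_snd).mul
      (hg.comp (hsum.sub measurable_const))) measurable_const
    exact (measurableSet_lt measurable_const hsum).inter (measurableSet_lt hsum measurable_const)
  rw [laplace_integral_comm hs hk.stronglyMeasurable (integrable_const (Mf * Mg))
      fun t u => abs_ite_mul_le (hfb u) (hgb _),
    setIntegral_congr_fun measurableSet_Ioc
      fun u hu => laplace_window_shift s (hu.2.trans hac) b (f u) g,
    integral_mul_const, integral_const_mul]

theorem stmt_16_general {Y : Type*} [MeasurableSpace Y] (μ : Measure Y) [IsProbabilityMeasure μ]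
    (F : Y → Y) (hF : MeasurePreserving F μ μ)
    (R : Y → ℝ) (hRmeas : Measurable R) (hRpos : ∀ y, 0 < R y)
    (hRint : Integrable R μ)
    (Rbar : ℝ)
    (v w : Y → ℝ → ℝ)
    (hvmeas : Measurable (Function.uncurry v)) (hwmeas : Measurable (Function.uncurry w))
    (Mv Mw : ℝ) (hvbd : ∀ y u, |v y u| ≤ Mv) (hwbd : ∀ y u, |w y u| ≤ Mw)
    (n : ℕ) (hn : 1 ≤ n) (s : ℂ) (hs : 0 < s.re)
    (Rn : Y → ℝ) (hRn : Rn = fun y => ∑ j ∈ Finset.range n, R (F^[j] y))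
    (vs ws : Y → ℂ)
    (hvs : ∀ y, vs y = ∫ u in Set.Ioc (0:ℝ) (R y), Complex.exp (s * u) * (v y u : ℂ))
    (hws : ∀ y, ws y = ∫ u in Set.Ioc (0:ℝ) (R y), Complex.exp (-s * u) * (w y u : ℂ))
    (Jn : ℝ → ℝ)
    (hJn : ∀ t, Jn t = (1 / Rbar) *
      ∫ y, (∫ u in Set.Ioc (0:ℝ) (R y),
        if Rn y < t + u ∧ t + u < Rn y + R (F^[n] y)
          then v y u * w (F^[n] y) (t + u - Rn y) else 0) ∂μ) :
    (∫ t in Set.Ioi (0:ℝ), Complex.exp (-s * t) * (Jn t : ℂ)) =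
      (1 / Rbar : ℂ) * ∫ y, Complex.exp (-s * (Rn y : ℂ)) * vs y * ws (F^[n] y) ∂μ := by
  have hFn : Measurable F^[n] := hF.measurable.iterate n
  have hRn_meas : Measurable Rn :=
    hRn ▸ Finset.measurable_sum _ fun j _ => hRmeas.comp (hF.measurable.iterate j)
  have hR_le_Rn : ∀ y, R y ≤ Rn y := fun y => by
    simpa [hRn] using Finset.single_le_sum (f := fun j => R (F^[j] y))
      (fun j _ => (hRpos _).le) (Finset.mem_range.mpr hn)
  set window : ℝ → Y → ℝ := fun t y => ∫ u in Ioc 0 (R y),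
    if Rn y < t + u ∧ t + u < Rn y + R (F^[n] y)
      then v y u * w (F^[n] y) (t + u - Rn y) else 0
  have hwindow_meas : StronglyMeasurable (uncurry window) := by
    have ht : Measurable fun q : (ℝ × Y) × ℝ => q.1.1 + q.2 := by fun_prop
    have hRn' : Measurable fun q : (ℝ × Y) × ℝ => Rn q.1.2 := by fun_prop
    refine stronglyMeasurable_setIntegral_Ioc (X := ℝ × Y) (f := fun p u =>
      if Rn p.2 < p.1 + u ∧ p.1 + u < Rn p.2 + R (F^[n] p.2)
        then v p.2 u * w (F^[n] p.2) (p.1 + u - Rn p.2) else 0)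
      (Measurable.ite ?_ ?_ measurable_const) (hRmeas.comp measurable_snd)
    · exact (measurableSet_lt hRn' ht).inter (measurableSet_lt ht (hRn'.add (by fun_prop)))
    · exact (hvmeas.comp (measurable_fst.snd.prodMk measurable_snd)).mul
        (hwmeas.comp ((hFn.comp measurable_fst.snd).prodMk (ht.sub hRn')))
  have hwindow_le (t : ℝ) (y : Y) : |window t y| ≤ Mv * Mw * R y :=
    abs_setIntegral_Ioc_le (hRpos y).le fun u => abs_ite_mul_le (hvbd y u) (hwbd _ _)
  simp_rw [hJn, Complex.ofReal_mul, mul_left_comm _ (((1 / Rbar : ℝ)) : ℂ)]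
  rw [integral_const_mul, laplace_integral_comm hs hwindow_meas (hRint.const_mul (Mv * Mw))
    hwindow_le]
  push_cast
  congr 1
  refine integral_congr_ae (.of_forall fun y => ?_)
  dsimp only
  rw [hvs, hws]
  exact laplace_window_integral hs (hR_le_Rn y) (hvmeas.comp measurable_prodMk_left)
    (hwmeas.comp measurable_prodMk_left) (hvbd y) (hwbd _)

theorem stmt_16 {Y : Type*} [MeasurableSpace Y] (μ : Measure Y) [IsProbabilityMeasure μ]
    (F : Y → Y) (hF : MeasurePreserving F μ μ)
    (R : Y → ℝ) (hRmeas : Measurable R) (hRpos : ∀ y, 0 < R y)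
    (hRint : Integrable R μ)
    (Rbar : ℝ) (hRbar : Rbar = ∫ y, R y ∂μ) (hRbarpos : 0 < Rbar)
    (v w : Y → ℝ → ℝ)
    (hvmeas : Measurable (Function.uncurry v)) (hwmeas : Measurable (Function.uncurry w))
    (Mv Mw : ℝ) (hvbd : ∀ y u, |v y u| ≤ Mv) (hwbd : ∀ y u, |w y u| ≤ Mw)
    (n : ℕ) (hn : 1 ≤ n) (s : ℂ) (hs : 0 < s.re)
    (Rn : Y → ℝ) (hRn : Rn = fun y => ∑ j ∈ Finset.range n, R (F^[j] y))
    (vs ws : Y → ℂ)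
    (hvs : ∀ y, vs y = ∫ u in Set.Ioc (0:ℝ) (R y), Complex.exp (s * u) * (v y u : ℂ))
    (hws : ∀ y, ws y = ∫ u in Set.Ioc (0:ℝ) (R y), Complex.exp (-s * u) * (w y u : ℂ))
    (Jn : ℝ → ℝ)
    (hJn : ∀ t, Jn t = (1 / Rbar) *
      ∫ y, (∫ u in Set.Ioc (0:ℝ) (R y),
        if Rn y < t + u ∧ t + u < Rn y + R (F^[n] y)
          then v y u * w (F^[n] y) (t + u - Rn y) else 0) ∂μ) :
    (∫ t in Set.Ioi (0:ℝ), Complex.exp (-s * t) * (Jn t : ℂ)) =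
      (1 / Rbar : ℂ) * ∫ y, Complex.exp (-s * (Rn y : ℂ)) * vs y * ws (F^[n] y) ∂μ :=
  stmt_16_general μ F hF R hRmeas hRpos hRint Rbar v w hvmeas hwmeas Mv Mw hvbd hwbd n hn s hs Rn
    hRn vs ws hvs hws Jn hJn
end

section
/- Let (Y, μ) be a probability space and R : Y → (0,∞) measurable with ∫_Y e^{aR} dμ < ∞ for some a > 0. Define, for v, w ∈ L^∞ of the suspension Y^R, J₀(t) = (1/R̄)∫_Y ∫₀^{R(y)} 1_{{t+u < R(y)}} v(y,u) w(y,t+u) du dμ(y). Then the Laplace transform Ĵ₀(s) = ∫₀^∞ e^{−st} J₀(t) dt extends analytically to {Re s > −a} and satisfies |Ĵ₀(s)| ≤ (1/R̄)·a^{−2}·(∫_Y e^{aR} dμ)·‖v‖_∞‖w‖_∞ for all s with Re s ≥ −a. -/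
/-!
On `-a ≤ re s` the Laplace integrand is dominated by `e^{at} |J₀ t|`, which gives the bound;
on `-a < re s` differentiating under the integral costs a factor `t`, absorbed by `e^{εt}`.
Pointwise `|J₀ t| ≤ R̄⁻¹ Mv Mw ∫ (R - t)⁺ dμ`, so by Tonelli
`∫₀^∞ e^{at} |J₀ t| dt ≤ R̄⁻¹ Mv Mw ∫_Y ∫₀^{R} e^{at} (R - t) dt dμ`, and the inner integral is
`(e^{aR} - aR - 1) / a² ≤ e^{aR} / a²`.
-/

open MeasureTheory Set Filter
open scoped Real Complex

lemma integrable_and_integral_le_of_lintegral_ofReal_le {α : Type*} [MeasurableSpace α]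
    {μ : Measure α} {g : α → ℝ} (hg : AEStronglyMeasurable g μ) (hg0 : ∀ x, 0 ≤ g x) {B : ℝ}
    (hB : 0 ≤ B) (h : ∫⁻ x, ENNReal.ofReal (g x) ∂μ ≤ ENNReal.ofReal B) :
    Integrable g μ ∧ ∫ x, g x ∂μ ≤ B := by
  refine ⟨⟨hg, (hasFiniteIntegral_iff_ofReal (ae_of_all _ hg0)).2
    (h.trans_lt ENNReal.ofReal_lt_top)⟩, ?_⟩
  rw [integral_eq_lintegral_of_nonneg_ae (ae_of_all _ hg0) hg]
  exact ENNReal.toReal_le_of_le_ofReal hB h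

lemma mul_exp_le_inv_mul_exp {a ε : ℝ} (hε : 0 < ε) (t : ℝ) :
    t * rexp ((a - ε) * t) ≤ ε⁻¹ * rexp (a * t) := by
  have h : ε * t ≤ rexp (ε * t) := by linarith [Real.add_one_le_exp (ε * t)]
  have hexp : rexp (a * t) = rexp (ε * t) * rexp ((a - ε) * t) := by
    rw [← Real.exp_add]; ring_nf
  rw [hexp, le_inv_mul_iff₀ hε, ← mul_assoc]
  exact mul_le_mul_of_nonneg_right h (Real.exp_pos _).le

noncomputable def laplaceTransform (f : ℝ → ℂ) (s : ℂ) : ℂ :=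
  ∫ t in Ioi (0 : ℝ), cexp (-s * t) * f t

section Laplace

variable {f : ℝ → ℂ} {a : ℝ}

lemma norm_cexp_neg_mul_le {s : ℂ} (hs : -a ≤ s.re) {t : ℝ} (ht : 0 ≤ t) :
    ‖cexp (-s * t)‖ ≤ rexp (a * t) := by
  rw [Complex.norm_exp]
  gcongr
  simp only [neg_mul, Complex.neg_re, Complex.mul_re, Complex.ofReal_re, Complex.ofReal_im,
    mul_zero, sub_zero]
  nlinarith

lemma norm_cexp_neg_mul_mul_le {s : ℂ} (hs : -a ≤ s.re) {t : ℝ} (ht : 0 ≤ t) (z : ℂ) :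
    ‖cexp (-s * t) * z‖ ≤ rexp (a * t) * ‖z‖ := by
  rw [norm_mul]
  exact mul_le_mul_of_nonneg_right (norm_cexp_neg_mul_le hs ht) (norm_nonneg z)

lemma aestronglyMeasurable_cexp_neg_mul_mul
    (hf : AEStronglyMeasurable f (volume.restrict (Ioi 0))) (s : ℂ) :
    AEStronglyMeasurable (fun t : ℝ => cexp (-s * t) * f t) (volume.restrict (Ioi 0)) :=
  (by fun_prop : Continuous fun t : ℝ => cexp (-s * t)).aestronglyMeasurable.mul hf

lemma integrableOn_cexp_neg_mul_mul (hf : AEStronglyMeasurable f (volume.restrict (Ioi 0)))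
    (hfa : IntegrableOn (fun t => rexp (a * t) * ‖f t‖) (Ioi 0)) {s : ℂ} (hs : -a ≤ s.re) :
    IntegrableOn (fun t : ℝ => cexp (-s * t) * f t) (Ioi 0) :=
  hfa.mono' (aestronglyMeasurable_cexp_neg_mul_mul hf s)
    ((ae_restrict_iff' measurableSet_Ioi).2 (ae_of_all _ fun _ ht =>
      norm_cexp_neg_mul_mul_le hs (le_of_lt ht) _))

lemma norm_laplaceTransform_le (hfa : IntegrableOn (fun t => rexp (a * t) * ‖f t‖) (Ioi 0))
    {s : ℂ} (hs : -a ≤ s.re) :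
    ‖laplaceTransform f s‖ ≤ ∫ t in Ioi 0, rexp (a * t) * ‖f t‖ :=
  norm_integral_le_of_norm_le hfa ((ae_restrict_iff' measurableSet_Ioi).2 (ae_of_all _ fun _ ht =>
      norm_cexp_neg_mul_mul_le hs (le_of_lt ht) _))

lemma differentiableOn_laplaceTransform
    (hf : AEStronglyMeasurable f (volume.restrict (Ioi 0)))
    (hfa : IntegrableOn (fun t => rexp (a * t) * ‖f t‖) (Ioi 0)) :
    DifferentiableOn ℂ (laplaceTransform f) {s | -a < s.re} := by
  intro s₀ (hs₀ : -a < s₀.re)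
  set ε := (s₀.re + a) / 2 with hε_def
  have hε : 0 < ε := by linarith
  have hball : ∀ s ∈ Metric.ball s₀ ε, -(a - ε) ≤ s.re := by
    intro s hs
    have := (Complex.abs_re_le_norm (s - s₀)).trans (mem_ball_iff_norm.1 hs).le
    rw [Complex.sub_re, abs_le] at this
    linarith
  -- on the ball, `‖-t e^{-st} f t‖ ≤ t e^{(a-ε)t} ‖f t‖ ≤ ε⁻¹ e^{at} ‖f t‖`
  have hderiv := hasDerivAt_integral_of_dominated_loc_of_deriv_le
    (F := fun (s : ℂ) (t : ℝ) => cexp (-s * t) * f t)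
    (F' := fun (s : ℂ) (t : ℝ) => -t * (cexp (-s * t) * f t))
    (bound := fun t => ε⁻¹ * (rexp (a * t) * ‖f t‖))
    (Metric.ball_mem_nhds s₀ hε)
    (Eventually.of_forall (aestronglyMeasurable_cexp_neg_mul_mul hf))
    (integrableOn_cexp_neg_mul_mul hf hfa (le_of_lt hs₀))
    ((by fun_prop : Continuous fun t : ℝ => -(t : ℂ)).aestronglyMeasurable.mul
      (aestronglyMeasurable_cexp_neg_mul_mul hf s₀))
    ((ae_restrict_iff' measurableSet_Ioi).2 (ae_of_all _ fun t (ht : 0 < t) s hs => by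
      calc ‖-(t : ℂ) * (cexp (-s * t) * f t)‖ ≤ t * (rexp ((a - ε) * t) * ‖f t‖) := by
            rw [norm_mul, norm_neg, Complex.norm_real, Real.norm_of_nonneg ht.le]
            exact mul_le_mul_of_nonneg_left (norm_cexp_neg_mul_mul_le (hball s hs) ht.le _) ht.le
        _ ≤ ε⁻¹ * (rexp (a * t) * ‖f t‖) := by
            rw [← mul_assoc, ← mul_assoc]
            exact mul_le_mul_of_nonneg_right (mul_exp_le_inv_mul_exp hε t) (norm_nonneg _)))
    (hfa.const_mul ε⁻¹)
    (ae_of_all _ fun t s _ => by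
      simpa [mul_comm, mul_assoc, mul_left_comm] using
        (((hasDerivAt_id s).neg.mul_const (t : ℂ)).cexp.mul_const (f t)))
  exact hderiv.2.differentiableAt.differentiableWithinAt

end Laplace

lemma intervalIntegral_exp_mul_mul_sub_le {a : ℝ} (ha : 0 < a) {R : ℝ} (hR : 0 ≤ R) :
    ∫ t in 0..R, rexp (a * t) * (R - t) ≤ rexp (a * R) / a ^ 2 := by
  have hderiv : ∀ t, HasDerivAt (fun t => rexp (a * t) * ((R - t) / a + 1 / a ^ 2))
      (rexp (a * t) * (R - t)) t := by
    intro t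
    refine (((hasDerivAt_id' t).const_mul a).exp.mul
      ((((hasDerivAt_id' t).const_sub R).div_const a).add_const (1 / a ^ 2))).congr_deriv ?_
    field_simp
    ring
  rw [intervalIntegral.integral_eq_sub_of_hasDerivAt (fun t _ => hderiv t)
    ((by fun_prop : Continuous fun t => rexp (a * t) * (R - t)).intervalIntegrable _ _)]
  simp only [sub_self, zero_div, zero_add, mul_zero, Real.exp_zero, one_mul, sub_zero, mul_one_div]
  linarith [show 0 ≤ R / a + 1 / a ^ 2 by positivity]

lemma lintegral_exp_mul_posPart_sub_le {a : ℝ} (ha : 0 < a) {R : ℝ} (hR : 0 ≤ R) :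
    ∫⁻ t in Ioi 0, ENNReal.ofReal (rexp (a * t) * max (R - t) 0)
      ≤ ENNReal.ofReal (rexp (a * R) / a ^ 2) := by
  have hind : (fun t => ENNReal.ofReal (rexp (a * t) * max (R - t) 0))
      = (Iic R).indicator fun t => ENNReal.ofReal (rexp (a * t) * (R - t)) := by
    ext t
    by_cases ht : t ≤ R
    · simp [ht]
    · simp [ht, max_eq_right (sub_nonpos.2 (not_le.1 ht).le)]
  rw [hind, setLIntegral_indicator measurableSet_Iic, inter_comm, Ioi_inter_Iic,
    ← ofReal_integral_eq_lintegral_ofReal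
      (by fun_prop : Continuous fun t => rexp (a * t) * (R - t)).integrableOn_Ioc
      ((ae_restrict_iff' measurableSet_Ioc).2 (ae_of_all _ fun t ht =>
        mul_nonneg (Real.exp_pos _).le (sub_nonneg.2 ht.2))),
    ← intervalIntegral.integral_of_le hR]
  exact ENNReal.ofReal_le_ofReal (intervalIntegral_exp_mul_mul_sub_le ha hR)

lemma abs_setIntegral_Ioc_ite_le {g : ℝ → ℝ} {M : ℝ} (hg : ∀ u, |g u| ≤ M) (t R : ℝ) :
    |∫ u in Ioc 0 R, if t + u < R then g u else 0| ≤ M * max (R - t) 0 := by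
  have hind : (fun u => if t + u < R then g u else 0) = (Iio (R - t)).indicator g := by
    ext u
    simp only [indicator_apply, mem_Iio, lt_sub_iff_add_lt']
  have hsub : Ioc 0 R ∩ Iio (R - t) ⊆ Ioo 0 (R - t) := fun u hu => ⟨hu.1.1, hu.2⟩
  have hfin : volume (Ioo (0 : ℝ) (R - t)) ≠ ⊤ := measure_Ioo_lt_top.ne
  rw [hind, setIntegral_indicator measurableSet_Iio, ← Real.norm_eq_abs]
  calc ‖∫ u in Ioc 0 R ∩ Iio (R - t), g u‖
      ≤ M * volume.real (Ioc 0 R ∩ Iio (R - t)) :=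
        norm_setIntegral_le_of_norm_le_const ((measure_mono hsub).trans_lt hfin.lt_top)
          fun u _ => hg u
    _ ≤ M * volume.real (Ioo 0 (R - t)) :=
        mul_le_mul_of_nonneg_left (measureReal_mono hsub hfin) ((abs_nonneg _).trans (hg 0))
    _ = M * max (R - t) 0 := by rw [Real.volume_real_Ioo, sub_zero]

section Suspension

variable {Y : Type*} [MeasurableSpace Y]

/-- `R̄ J₀(t)`, the correlation on the suspension `{(y, u) | 0 < u ≤ R y}` cut off at the roof. -/
noncomputable def suspensionCorrelation (μ : Measure Y) (R : Y → ℝ) (v w : Y → ℝ → ℝ) (t : ℝ) :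
    ℝ :=
  ∫ y, (∫ u in Ioc (0 : ℝ) (R y), if t + u < R y then v y u * w y (t + u) else 0) ∂μ

variable {μ : Measure Y} {R : Y → ℝ} {v w : Y → ℝ → ℝ}

lemma stronglyMeasurable_suspensionCorrelation [SFinite μ] (hR : Measurable R)
    (hv : Measurable (Function.uncurry v)) (hw : Measurable (Function.uncurry w)) :
    StronglyMeasurable (suspensionCorrelation μ R v w) := by
  set F : (ℝ × Y) × ℝ → ℝ := fun p => (Ioc 0 (R p.1.2)).indicator
    (fun u => if p.1.1 + u < R p.1.2 then v p.1.2 u * w p.1.2 (p.1.1 + u) else 0) p.2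
  have hF : Measurable F := by
    refine Measurable.ite (p := {p : (ℝ × Y) × ℝ | p.2 ∈ Ioc 0 (R p.1.2)}) ?_
      (Measurable.ite (p := {p : (ℝ × Y) × ℝ | p.1.1 + p.2 < R p.1.2}) ?_ ?_ measurable_const)
      measurable_const
    · exact (measurableSet_lt measurable_const measurable_snd).inter
        (measurableSet_le measurable_snd (hR.comp measurable_fst.snd))
    · exact measurableSet_lt (by fun_prop) (hR.comp measurable_fst.snd)
    · exact (hv.comp (measurable_fst.snd.prodMk measurable_snd)).mul
        (hw.comp (measurable_fst.snd.prodMk (measurable_fst.fst.add measurable_snd)))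
  have hcorr : suspensionCorrelation μ R v w = fun t => ∫ y, ∫ u, F ((t, y), u) ∂volume ∂μ := by
    ext t
    simp only [suspensionCorrelation, F, integral_indicator measurableSet_Ioc]
  rw [hcorr]
  exact hF.stronglyMeasurable.integral_prod_right'.integral_prod_right'

lemma integrable_posPart_sub_const [IsFiniteMeasure μ] (hR : Integrable R μ) (t : ℝ) :
    Integrable (fun y => max (R y - t) 0) μ :=
  (hR.sub (integrable_const t)).pos_part

lemma abs_suspensionCorrelation_le [IsFiniteMeasure μ] (hR : Integrable R μ) {Mv Mw : ℝ}
    (hv : ∀ y u, |v y u| ≤ Mv) (hw : ∀ y u, |w y u| ≤ Mw) (t : ℝ) :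
    |suspensionCorrelation μ R v w t| ≤ Mv * Mw * ∫ y, max (R y - t) 0 ∂μ := by
  rw [← integral_const_mul, ← Real.norm_eq_abs]
  refine norm_integral_le_of_norm_le ((integrable_posPart_sub_const hR t).const_mul _)
    (ae_of_all _ fun y => abs_setIntegral_Ioc_ite_le (fun u => ?_) t (R y))
  rw [abs_mul]
  exact mul_le_mul (hv y u) (hw y _) (abs_nonneg _) ((abs_nonneg _).trans (hv y u))

lemma lintegral_exp_mul_integral_posPart_sub_le [IsFiniteMeasure μ] {a : ℝ} (ha : 0 < a)
    (hRm : Measurable R) (hR0 : ∀ y, 0 ≤ R y) (hR : Integrable R μ)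
    (hexp : Integrable (fun y => rexp (a * R y)) μ) :
    ∫⁻ t in Ioi 0, ENNReal.ofReal (rexp (a * t) * ∫ y, max (R y - t) 0 ∂μ)
      ≤ ENNReal.ofReal ((∫ y, rexp (a * R y) ∂μ) / a ^ 2) := by
  have hinner : ∀ t, ENNReal.ofReal (rexp (a * t) * ∫ y, max (R y - t) 0 ∂μ)
      = ∫⁻ y, ENNReal.ofReal (rexp (a * t) * max (R y - t) 0) ∂μ := fun t => by
    rw [← integral_const_mul, ofReal_integral_eq_lintegral_ofReal
      ((integrable_posPart_sub_const hR t).const_mul _)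
      (ae_of_all _ fun y => mul_nonneg (Real.exp_pos _).le (le_max_right _ _))]
  calc ∫⁻ t in Ioi 0, ENNReal.ofReal (rexp (a * t) * ∫ y, max (R y - t) 0 ∂μ)
      = ∫⁻ y, (∫⁻ t in Ioi 0, ENNReal.ofReal (rexp (a * t) * max (R y - t) 0)) ∂μ := by
        simp_rw [hinner]
        exact lintegral_lintegral_swap (Measurable.aemeasurable (by fun_prop))
    _ ≤ ∫⁻ y, ENNReal.ofReal (rexp (a * R y) / a ^ 2) ∂μ :=
        lintegral_mono fun y => lintegral_exp_mul_posPart_sub_le ha (hR0 y)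
    _ = ENNReal.ofReal ((∫ y, rexp (a * R y) ∂μ) / a ^ 2) := by
        rw [← integral_div, ofReal_integral_eq_lintegral_ofReal (hexp.div_const _)
          (ae_of_all _ fun y => by positivity)]

lemma lintegral_exp_mul_abs_suspensionCorrelation_le [IsFiniteMeasure μ] {a : ℝ} (ha : 0 < a)
    (hRm : Measurable R) (hR0 : ∀ y, 0 ≤ R y) (hR : Integrable R μ)
    (hexp : Integrable (fun y => rexp (a * R y)) μ) {Mv Mw : ℝ}
    (hv : ∀ y u, |v y u| ≤ Mv) (hw : ∀ y u, |w y u| ≤ Mw) :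
    ∫⁻ t in Ioi 0, ENNReal.ofReal (rexp (a * t) * |suspensionCorrelation μ R v w t|)
      ≤ ENNReal.ofReal (Mv * Mw * ((∫ y, rexp (a * R y) ∂μ) / a ^ 2)) := by
  have hpos : 0 ≤ (∫ y, rexp (a * R y) ∂μ) / a ^ 2 :=
    div_nonneg (integral_nonneg fun y => (Real.exp_pos _).le) (sq_nonneg a)
  calc ∫⁻ t in Ioi 0, ENNReal.ofReal (rexp (a * t) * |suspensionCorrelation μ R v w t|)
      ≤ ∫⁻ t in Ioi 0, ENNReal.ofReal (Mv * Mw) *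
          ENNReal.ofReal (rexp (a * t) * ∫ y, max (R y - t) 0 ∂μ) := by
        refine lintegral_mono fun t => ?_
        rw [← ENNReal.ofReal_mul' (mul_nonneg (Real.exp_pos _).le
          (integral_nonneg fun y => le_max_right (R y - t) 0))]
        refine ENNReal.ofReal_le_ofReal ?_
        calc rexp (a * t) * |suspensionCorrelation μ R v w t|
            ≤ rexp (a * t) * (Mv * Mw * ∫ y, max (R y - t) 0 ∂μ) :=
              mul_le_mul_of_nonneg_left (abs_suspensionCorrelation_le hR hv hw t)
                (Real.exp_pos _).le
          _ = Mv * Mw * (rexp (a * t) * ∫ y, max (R y - t) 0 ∂μ) := by ring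
    _ = ENNReal.ofReal (Mv * Mw) *
          ∫⁻ t in Ioi 0, ENNReal.ofReal (rexp (a * t) * ∫ y, max (R y - t) 0 ∂μ) :=
        lintegral_const_mul' _ _ ENNReal.ofReal_ne_top
    _ ≤ ENNReal.ofReal (Mv * Mw) * ENNReal.ofReal ((∫ y, rexp (a * R y) ∂μ) / a ^ 2) := by
        gcongr
        exact lintegral_exp_mul_integral_posPart_sub_le ha hRm hR0 hR hexp
    _ = ENNReal.ofReal (Mv * Mw * ((∫ y, rexp (a * R y) ∂μ) / a ^ 2)) :=
        (ENNReal.ofReal_mul' hpos).symm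

lemma integrableOn_exp_mul_abs_suspensionCorrelation [IsFiniteMeasure μ] [NeZero μ]
    {a : ℝ} (ha : 0 < a) (hRm : Measurable R) (hR0 : ∀ y, 0 ≤ R y) (hR : Integrable R μ)
    (hexp : Integrable (fun y => rexp (a * R y)) μ) (hvm : Measurable (Function.uncurry v))
    (hwm : Measurable (Function.uncurry w)) {Mv Mw : ℝ}
    (hv : ∀ y u, |v y u| ≤ Mv) (hw : ∀ y u, |w y u| ≤ Mw) :
    IntegrableOn (fun t => rexp (a * t) * |suspensionCorrelation μ R v w t|) (Ioi 0) ∧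
      ∫ t in Ioi 0, rexp (a * t) * |suspensionCorrelation μ R v w t|
        ≤ Mv * Mw * ((∫ y, rexp (a * R y) ∂μ) / a ^ 2) := by
  obtain ⟨y₀⟩ := μ.nonempty_of_neZero
  have hMv : 0 ≤ Mv := (abs_nonneg _).trans (hv y₀ 0)
  have hMw : 0 ≤ Mw := (abs_nonneg _).trans (hw y₀ 0)
  have hpos : 0 ≤ (∫ y, rexp (a * R y) ∂μ) / a ^ 2 :=
    div_nonneg (integral_nonneg fun y => (Real.exp_pos _).le) (sq_nonneg a)
  exact integrable_and_integral_le_of_lintegral_ofReal_le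
    ((by fun_prop : Continuous fun t => rexp (a * t)).aestronglyMeasurable.mul
      (stronglyMeasurable_suspensionCorrelation hRm hvm hwm).aestronglyMeasurable.norm)
    (fun t => mul_nonneg (Real.exp_pos _).le (abs_nonneg _)) (by positivity)
    (lintegral_exp_mul_abs_suspensionCorrelation_le ha hRm hR0 hR hexp hv hw)

end Suspension

theorem stmt_17_general {Y : Type*} [MeasurableSpace Y] (μ : Measure Y) [IsProbabilityMeasure μ]
    (R : Y → ℝ) (hRmeas : Measurable R) (hRpos : ∀ y, 0 < R y)
    (hRint : Integrable R μ)
    (a : ℝ) (ha : 0 < a) (hexp : Integrable (fun y => Real.exp (a * R y)) μ)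
    (Rbar : ℝ) (hRbarpos : 0 < Rbar)
    (v w : Y → ℝ → ℝ)
    (hvmeas : Measurable (Function.uncurry v)) (hwmeas : Measurable (Function.uncurry w))
    (Mv Mw : ℝ) (hvbd : ∀ y u, |v y u| ≤ Mv) (hwbd : ∀ y u, |w y u| ≤ Mw)
    (J₀ : ℝ → ℝ)
    (hJ₀ : ∀ t, J₀ t = (1 / Rbar) *
      ∫ y, (∫ u in Set.Ioc (0:ℝ) (R y),
        if t + u < R y then v y u * w y (t + u) else 0) ∂μ) :
    DifferentiableOn ℂ
        (fun s : ℂ => ∫ t in Set.Ioi (0:ℝ), Complex.exp (-s * t) * (J₀ t : ℂ))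
        {s : ℂ | -a < s.re} ∧
      ∀ s : ℂ, -a ≤ s.re →
        ‖∫ t in Set.Ioi (0:ℝ), Complex.exp (-s * t) * (J₀ t : ℂ)‖ ≤
          (1 / Rbar) * (a ^ 2)⁻¹ * (∫ y, Real.exp (a * R y) ∂μ) * Mv * Mw := by
  have hJ : J₀ = fun t => Rbar⁻¹ * suspensionCorrelation μ R v w t := by
    ext t; rw [hJ₀ t, one_div]; rfl
  have hweight : (fun t => rexp (a * t) * ‖(J₀ t : ℂ)‖)
      = fun t => Rbar⁻¹ * (rexp (a * t) * |suspensionCorrelation μ R v w t|) := by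
    ext t
    rw [Complex.norm_real, Real.norm_eq_abs, hJ, abs_mul, abs_of_pos (inv_pos.2 hRbarpos)]
    ring
  obtain ⟨hint, hle⟩ := integrableOn_exp_mul_abs_suspensionCorrelation ha hRmeas
    (fun y => (hRpos y).le) hRint hexp hvmeas hwmeas hvbd hwbd
  have hJint : IntegrableOn (fun t => rexp (a * t) * ‖(J₀ t : ℂ)‖) (Ioi 0) :=
    hweight ▸ hint.const_mul _
  have hJmeas : AEStronglyMeasurable (fun t => (J₀ t : ℂ)) (volume.restrict (Ioi 0)) := by
    rw [hJ]
    exact (Complex.continuous_ofReal.comp_stronglyMeasurable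
      ((stronglyMeasurable_suspensionCorrelation hRmeas hvmeas hwmeas).const_mul _))
      |>.aestronglyMeasurable
  refine ⟨differentiableOn_laplaceTransform hJmeas hJint, fun s hs => ?_⟩
  calc ‖laplaceTransform (fun t => (J₀ t : ℂ)) s‖
      ≤ ∫ t in Ioi 0, rexp (a * t) * ‖(J₀ t : ℂ)‖ := norm_laplaceTransform_le hJint hs
    _ ≤ Rbar⁻¹ * (Mv * Mw * ((∫ y, rexp (a * R y) ∂μ) / a ^ 2)) := by
      rw [hweight, integral_const_mul]
      gcongr
    _ = (1 / Rbar) * (a ^ 2)⁻¹ * (∫ y, rexp (a * R y) ∂μ) * Mv * Mw := by ring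

theorem stmt_17 {Y : Type*} [MeasurableSpace Y] (μ : Measure Y) [IsProbabilityMeasure μ]
    (R : Y → ℝ) (hRmeas : Measurable R) (hRpos : ∀ y, 0 < R y)
    (hRint : Integrable R μ)
    (a : ℝ) (ha : 0 < a) (hexp : Integrable (fun y => Real.exp (a * R y)) μ)
    (Rbar : ℝ) (hRbar : Rbar = ∫ y, R y ∂μ) (hRbarpos : 0 < Rbar)
    (v w : Y → ℝ → ℝ)
    (hvmeas : Measurable (Function.uncurry v)) (hwmeas : Measurable (Function.uncurry w))
    (Mv Mw : ℝ) (hvbd : ∀ y u, |v y u| ≤ Mv) (hwbd : ∀ y u, |w y u| ≤ Mw)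
    (J₀ : ℝ → ℝ)
    (hJ₀ : ∀ t, J₀ t = (1 / Rbar) *
      ∫ y, (∫ u in Set.Ioc (0:ℝ) (R y),
        if t + u < R y then v y u * w y (t + u) else 0) ∂μ) :
    DifferentiableOn ℂ
        (fun s : ℂ => ∫ t in Set.Ioi (0:ℝ), Complex.exp (-s * t) * (J₀ t : ℂ))
        {s : ℂ | -a < s.re} ∧
      ∀ s : ℂ, -a ≤ s.re →
        ‖∫ t in Set.Ioi (0:ℝ), Complex.exp (-s * t) * (J₀ t : ℂ)‖ ≤
          (1 / Rbar) * (a ^ 2)⁻¹ * (∫ y, Real.exp (a * R y) ∂μ) * Mv * Mw :=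
  stmt_17_general μ R hRmeas hRpos hRint a ha hexp Rbar hRbarpos v w hvmeas hwmeas Mv Mw hvbd hwbd
    J₀ hJ₀
end
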